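/- Let A_1, A_2 > 0 and take (d_1,d_2) = (5,5), n = 10. On ℝ²×ℝ² define v(q) := e^{(5q_1 + 5q_2)/2}, J(p) := (1/9)(p_1+p_2)² − (p_1² + p_2²)/5, S(q) := A_1 e^{−q_1} + A_2 e^{−q_2}, the Ricci-flat Hamiltonian H(q,p) := v(q)^{-1}J(p) − S(q)v(q), and F(q,p) := −(1/45)(p_1 − 2p_2)² e^{−2q_1 − 4q_2} + A_1 e^{2q_1 + q_2}. Then F is a generalized first integral of H: there exists a smooth function φ on ℝ²×ℝ² such that {F,H} = φ·H identically; in particular {F,H}(q,p) = 0 at every point (q,p) with H(q,p) = 0. -/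

import Mathlib

/-- Partial derivative in the `i`-th `q`-coordinate. -/
noncomputable def pderivQ (F : (Fin 2 → ℝ) → (Fin 2 → ℝ) → ℝ) (i : Fin 2)
    (q p : Fin 2 → ℝ) : ℝ :=
  deriv (fun t => F (Function.update q i t) p) (q i)

/-- Partial derivative in the `i`-th `p`-coordinate. -/
noncomputable def pderivP (F : (Fin 2 → ℝ) → (Fin 2 → ℝ) → ℝ) (i : Fin 2)
    (q p : Fin 2 → ℝ) : ℝ :=
  deriv (fun t => F q (Function.update p i t)) (p i)

/-- Canonical Poisson bracket on `ℝ² × ℝ²`. -/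
noncomputable def poisson (F G : (Fin 2 → ℝ) → (Fin 2 → ℝ) → ℝ) (q p : Fin 2 → ℝ) : ℝ :=
  ∑ i : Fin 2, (pderivQ F i q p * pderivP G i q p - pderivP F i q p * pderivQ G i q p)

/-- The Ricci-flat Hamiltonian for `(d₁,d₂) = (5,5)`, `n = 10`:
`v(q) = e^{(5q₁+5q₂)/2}`, `J(p) = (p₁+p₂)²/9 − (p₁²+p₂²)/5`,
`S(q) = A₁e^{−q₁} + A₂e^{−q₂}`, `H = v⁻¹J − Sv`. -/
noncomputable def Ham (A1 A2 : ℝ) (q p : Fin 2 → ℝ) : ℝ :=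
  (Real.exp ((5 * q 0 + 5 * q 1) / 2))⁻¹ *
      ((1 / 9) * (p 0 + p 1) ^ 2 - ((p 0) ^ 2 + (p 1) ^ 2) / 5) -
    (A1 * Real.exp (-(q 0)) + A2 * Real.exp (-(q 1))) * Real.exp ((5 * q 0 + 5 * q 1) / 2)

/-- The Dancer–Wang generalized first integral for `(d₁,d₂) = (5,5)`. -/
noncomputable def Fint (A1 : ℝ) (q p : Fin 2 → ℝ) : ℝ :=
  -(1 / 45) * (p 0 - 2 * p 1) ^ 2 * Real.exp (-2 * q 0 - 4 * q 1) +
    A1 * Real.exp (2 * q 0 + q 1)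

/-! Both `H` and `F` are combinations of exponentials `e^{a·q}` with coefficients polynomial
in `p`, and `∂/∂q_i` multiplies `e^{a·q}` by `a_i`. Expanding `{F,H}` in these terms, everything
matches `φ H` with `φ = -(1/45)(p₁ - 2p₂) e^{-2q₁ - 4q₂}` once one uses the single coincidence
`e^{(2,1)·q} e^{-(5/2,5/2)·q} = e^{(-2,-4)·q} e^{(3/2,5/2)·q}` between the `A₁`-terms. -/

open Real Function Matrix

section UpdateDerivatives

variable {ι : Type*} [Fintype ι] [DecidableEq ι]

theorem hasDerivAt_dotProduct_update (c p : ι → ℝ) (i : ι) (x : ℝ) :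
    HasDerivAt (fun t => c ⬝ᵥ update p i t) (c i) x := by
  have h := HasDerivAt.fun_sum (u := Finset.univ)
    fun j _ => (hasDerivAt_pi.1 (hasDerivAt_update p i x) j).const_mul (c j)
  simpa [dotProduct, Pi.single_apply] using h

theorem hasDerivAt_dotProduct_self_update (p : ι → ℝ) (i : ι) :
    HasDerivAt (fun t => update p i t ⬝ᵥ update p i t) (2 * p i) (p i) := by
  have h := HasDerivAt.fun_sum (u := Finset.univ)
    fun j _ => (hasDerivAt_pi.1 (hasDerivAt_update p i (p i)) j).fun_pow 2
  simpa [dotProduct, Pi.single_apply, sq] using h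

theorem hasDerivAt_exp_dotProduct_update (c p : ι → ℝ) (i : ι) :
    HasDerivAt (fun t => exp (c ⬝ᵥ update p i t)) (c i * exp (c ⬝ᵥ p)) (p i) := by
  simpa [mul_comm] using (hasDerivAt_dotProduct_update c p i (p i)).exp

theorem hasDerivAt_dotProduct_update_sq (c p : ι → ℝ) (i : ι) :
    HasDerivAt (fun t => (c ⬝ᵥ update p i t) ^ 2) (2 * (c ⬝ᵥ p) * c i) (p i) := by
  simpa using (hasDerivAt_dotProduct_update c p i (p i)).fun_pow 2

end UpdateDerivatives

theorem Ham_eq (A1 A2 : ℝ) (q p : Fin 2 → ℝ) :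
    Ham A1 A2 q p =
      ((1 / 9) * (1 ⬝ᵥ p) ^ 2 - (1 / 5) * (p ⬝ᵥ p)) * exp (![-5 / 2, -5 / 2] ⬝ᵥ q) -
        A1 * exp (![3 / 2, 5 / 2] ⬝ᵥ q) - A2 * exp (![5 / 2, 3 / 2] ⬝ᵥ q) := by
  rw [Ham, ← exp_neg, add_mul, mul_assoc, mul_assoc, ← exp_add, ← exp_add]
  simp only [dotProduct, Fin.sum_univ_two, cons_val_zero, cons_val_one, Pi.one_apply]
  ring_nf

theorem Fint_eq (A1 : ℝ) (q p : Fin 2 → ℝ) :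
    Fint A1 q p =
      -(1 / 45) * (![1, -2] ⬝ᵥ p) ^ 2 * exp (![-2, -4] ⬝ᵥ q) +
        A1 * exp (![2, 1] ⬝ᵥ q) := by
  simp only [Fint, dotProduct, Fin.sum_univ_two, cons_val_zero, cons_val_one]
  ring_nf

section PartialDerivatives

variable (A1 A2 : ℝ) (q p : Fin 2 → ℝ) (i : Fin 2)

theorem pderivQ_Fint :
    pderivQ (Fint A1) i q p =
      -(1 / 45) * (![1, -2] ⬝ᵥ p) ^ 2 * ![-2, -4] i * exp (![-2, -4] ⬝ᵥ q) +
        A1 * ![2, 1] i * exp (![2, 1] ⬝ᵥ q) := by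
  simp only [pderivQ, Fint_eq]
  exact (((hasDerivAt_exp_dotProduct_update _ q i).const_mul _).add
    ((hasDerivAt_exp_dotProduct_update _ q i).const_mul _)).deriv.trans (by ring)

theorem pderivP_Fint :
    pderivP (Fint A1) i q p =
      -(2 / 45) * (![1, -2] ⬝ᵥ p) * ![1, -2] i * exp (![-2, -4] ⬝ᵥ q) := by
  simp only [pderivP, Fint_eq]
  exact ((((hasDerivAt_dotProduct_update_sq _ p i).const_mul _).mul_const _).add_const _).deriv
    |>.trans (by ring)

theorem pderivQ_Ham :
    pderivQ (Ham A1 A2) i q p =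
      ((1 / 9) * (1 ⬝ᵥ p) ^ 2 - (1 / 5) * (p ⬝ᵥ p)) * ![-5 / 2, -5 / 2] i *
          exp (![-5 / 2, -5 / 2] ⬝ᵥ q) -
        A1 * ![3 / 2, 5 / 2] i * exp (![3 / 2, 5 / 2] ⬝ᵥ q) -
        A2 * ![5 / 2, 3 / 2] i * exp (![5 / 2, 3 / 2] ⬝ᵥ q) := by
  simp only [pderivQ, Ham_eq]
  exact ((((hasDerivAt_exp_dotProduct_update _ q i).const_mul _).sub
    ((hasDerivAt_exp_dotProduct_update _ q i).const_mul _)).sub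
    ((hasDerivAt_exp_dotProduct_update _ q i).const_mul _)).deriv.trans (by ring)

theorem pderivP_Ham :
    pderivP (Ham A1 A2) i q p =
      ((2 / 9) * (1 ⬝ᵥ p) - (2 / 5) * p i) * exp (![-5 / 2, -5 / 2] ⬝ᵥ q) := by
  simp only [pderivP, Ham_eq]
  exact (((((hasDerivAt_dotProduct_update_sq 1 p i).const_mul _).sub
    ((hasDerivAt_dotProduct_self_update p i).const_mul _)).mul_const _).sub_const _
    |>.sub_const _).deriv.trans (by rw [Pi.one_apply]; ring)

end PartialDerivatives

noncomputable def bracketFactor (q p : Fin 2 → ℝ) : ℝ :=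
  -(1 / 45) * (![1, -2] ⬝ᵥ p) * exp (![-2, -4] ⬝ᵥ q)

theorem poisson_Fint_Ham (A1 A2 : ℝ) (q p : Fin 2 → ℝ) :
    poisson (Fint A1) (Ham A1 A2) q p = bracketFactor q p * Ham A1 A2 q p := by
  have hrel : exp (![2, 1] ⬝ᵥ q) * exp (![-5 / 2, -5 / 2] ⬝ᵥ q) =
      exp (![-2, -4] ⬝ᵥ q) * exp (![3 / 2, 5 / 2] ⬝ᵥ q) := by
    simp only [← exp_add, ← add_dotProduct]
    norm_num
  rw [poisson, Fin.sum_univ_two, pderivQ_Fint, pderivQ_Fint, pderivP_Fint, pderivP_Fint,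
    pderivQ_Ham, pderivQ_Ham, pderivP_Ham, pderivP_Ham, bracketFactor, Ham_eq]
  simp only [dotProduct, Fin.sum_univ_two, cons_val_zero, cons_val_one, Pi.one_apply] at hrel ⊢
  linear_combination (-(2 / 15) * A1 * (p 0 - 2 * p 1)) * hrel

theorem five_five_generalized_first_integral_general
    (A1 A2 : ℝ) :
    (∃ φ : ((Fin 2 → ℝ) × (Fin 2 → ℝ)) → ℝ, ContDiff ℝ (⊤ : ℕ∞) φ ∧
      ∀ q p : Fin 2 → ℝ,
        poisson (Fint A1) (Ham A1 A2) q p = φ (q, p) * Ham A1 A2 q p) ∧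
    (∀ q p : Fin 2 → ℝ, Ham A1 A2 q p = 0 → poisson (Fint A1) (Ham A1 A2) q p = 0) := by
  refine ⟨⟨fun z => bracketFactor z.1 z.2, ?_, poisson_Fint_Ham A1 A2⟩, fun q p hH => ?_⟩
  · unfold bracketFactor dotProduct
    fun_prop
  · rw [poisson_Fint_Ham, hH, mul_zero]

/-- `F` is a generalized first integral of `H`: `{F,H} = φ·H` for a smooth `φ`;
in particular `{F,H}` vanishes on the zero set of `H`. -/
theorem five_five_generalized_first_integral
    (A1 A2 : ℝ) (hA1 : 0 < A1) (hA2 : 0 < A2) :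
    (∃ φ : ((Fin 2 → ℝ) × (Fin 2 → ℝ)) → ℝ, ContDiff ℝ (⊤ : ℕ∞) φ ∧
      ∀ q p : Fin 2 → ℝ,
        poisson (Fint A1) (Ham A1 A2) q p = φ (q, p) * Ham A1 A2 q p) ∧
    (∀ q p : Fin 2 → ℝ, Ham A1 A2 q p = 0 → poisson (Fint A1) (Ham A1 A2) q p = 0) :=
  five_five_generalized_first_integral_general A1 A2
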